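/- arXiv:quant-ph/0603199 — 2 statements merged into one kernel-verified Lean document; each statement's English description precedes it below -/
import Mathlib

section
/- Let A be a Hermitian complex matrix indexed by (Fin M) × (Fin N). Then the maximum of Re tr(Aσ) over σ ∈ S_{M,N} exists and equals the maximum over unit vectors a ∈ ℂ^M and b ∈ ℂ^N of the (real) quadratic form (a⊗b)ᴴ A (a⊗b), where a⊗b denotes the vector with components (a⊗b)_{(j,l)} = a_j · b_l. -/
open scoped Matrix Kronecker BigOperators

/-- The rank-one matrix `a aᴴ` with `(j,k)` entry `a j * conj (a k)`. -/
noncomputable def outer {M : ℕ} (a : Fin M → ℂ) : Matrix (Fin M) (Fin M) ℂ :=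
  Matrix.vecMulVec a (fun k => (starRingEnd ℂ) (a k))

/-- The pure product density matrix `(a aᴴ) ⊗ (b bᴴ)`. -/
noncomputable def prodState {M N : ℕ} (a : Fin M → ℂ) (b : Fin N → ℂ) :
    Matrix (Fin M × Fin N) (Fin M × Fin N) ℂ :=
  outer a ⊗ₖ outer b

/-- `a` is a unit vector (squared Euclidean norm equal to 1). -/
def unitVec {M : ℕ} (a : Fin M → ℂ) : Prop := ∑ j, Complex.normSq (a j) = 1

/-- The set of separable states: the real convex hull of pure product density matrices. -/
noncomputable def SepSet (M N : ℕ) : Set (Matrix (Fin M × Fin N) (Fin M × Fin N) ℂ) :=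
  convexHull ℝ { X | ∃ a b, unitVec a ∧ unitVec b ∧ X = prodState a b }

/-- The tensor (Kronecker) product of two vectors. -/
def kvec {M N : ℕ} (a : Fin M → ℂ) (b : Fin N → ℂ) : Fin M × Fin N → ℂ :=
  fun p => a p.1 * b p.2

/-!
The map `σ ↦ Re tr(A σ)` is `ℝ`-linear, hence convex, so on the convex hull `SepSet M N` it is
bounded by its values on the generating pure product states, where it equals the quadratic form
`(a ⊗ b)ᴴ A (a ⊗ b)`. That form is continuous on the compact nonempty set of pairs of unit
vectors, so it attains a maximum, which is then the maximum over `SepSet M N` as well.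
-/

lemma IsGreatest.image_convexHull {E : Type*} [AddCommGroup E] [Module ℝ E] {s : Set E}
    {f : E → ℝ} (hf : ConvexOn ℝ (convexHull ℝ s) f) {v : ℝ} (h : IsGreatest (f '' s) v) :
    IsGreatest (f '' convexHull ℝ s) v := by
  refine ⟨Set.image_mono (subset_convexHull ℝ s) h.1, ?_⟩
  rintro _ ⟨x, hx, rfl⟩
  obtain ⟨y, hy, hxy⟩ := hf.exists_ge_of_mem_convexHull (subset_convexHull ℝ s) hx
  exact hxy.trans (h.2 ⟨y, hy, rfl⟩)

lemma trace_mul_vecMulVec {ι : Type*} [Fintype ι] (A : Matrix ι ι ℂ) (x : ι → ℂ) :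
    Matrix.trace (A * Matrix.vecMulVec x (star x)) = star x ⬝ᵥ A.mulVec x := by
  simp only [Matrix.trace, Matrix.diag, Matrix.mul_apply, Matrix.vecMulVec_apply,
    dotProduct, Matrix.mulVec, Pi.star_apply, Finset.mul_sum]
  exact Finset.sum_congr rfl fun i _ => Finset.sum_congr rfl fun j _ => by ring

lemma unitVec_iff_norm_toLp {M : ℕ} (a : Fin M → ℂ) :
    unitVec a ↔ ‖WithLp.toLp 2 a‖ = 1 := by
  rw [← pow_eq_one_iff_of_nonneg (norm_nonneg _) two_ne_zero, EuclideanSpace.norm_sq_eq, unitVec]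
  simp [Complex.normSq_eq_norm_sq]

lemma isCompact_setOf_unitVec (M : ℕ) : IsCompact {a : Fin M → ℂ | unitVec a} := by
  have : {a : Fin M → ℂ | unitVec a} =
      WithLp.ofLp '' Metric.sphere (0 : EuclideanSpace ℂ (Fin M)) 1 := by
    ext a
    rw [Set.mem_ofPred_eq, unitVec_iff_norm_toLp]
    exact ⟨fun h => ⟨WithLp.toLp 2 a, by simpa using h, rfl⟩,
      by rintro ⟨x, hx, rfl⟩; simpa using hx⟩
  rw [this]
  exact (isCompact_sphere _ _).image (PiLp.continuous_ofLp 2 _)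

lemma exists_unitVec {M : ℕ} (hM : 1 ≤ M) : ∃ a : Fin M → ℂ, unitVec a :=
  ⟨Pi.single ⟨0, hM⟩ 1, by simp [unitVec, apply_ite Complex.normSq, Pi.single_apply]⟩

lemma prodState_eq_vecMulVec_kvec {M N : ℕ} (a : Fin M → ℂ) (b : Fin N → ℂ) :
    prodState a b = Matrix.vecMulVec (kvec a b) (star (kvec a b)) := by
  ext ⟨j, l⟩ ⟨k, m⟩
  simp only [prodState, outer, kvec, Matrix.kroneckerMap_apply, Matrix.vecMulVec_apply,
    Pi.star_apply, star_mul', RCLike.star_def]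
  ring

lemma trace_mul_prodState {M N : ℕ} (A : Matrix (Fin M × Fin N) (Fin M × Fin N) ℂ)
    (a : Fin M → ℂ) (b : Fin N → ℂ) :
    Matrix.trace (A * prodState a b) = star (kvec a b) ⬝ᵥ A.mulVec (kvec a b) := by
  rw [prodState_eq_vecMulVec_kvec, trace_mul_vecMulVec]

theorem max_over_separable_eq_max_over_product_vectors_general
    (M N : ℕ) (hM : 1 ≤ M) (hN : 1 ≤ N)
    (A : Matrix (Fin M × Fin N) (Fin M × Fin N) ℂ) :
    ∃ v : ℝ,
      IsGreatest {r : ℝ | ∃ σ ∈ SepSet M N, r = (Matrix.trace (A * σ)).re} v ∧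
      IsGreatest {r : ℝ | ∃ a b, unitVec a ∧ unitVec b ∧
          r = ((star (kvec a b)) ⬝ᵥ A.mulVec (kvec a b)).re} v := by
  let g : (Fin M → ℂ) × (Fin N → ℂ) → ℝ :=
    fun p => (star (kvec p.1 p.2) ⬝ᵥ A.mulVec (kvec p.1 p.2)).re
  have hg : Continuous g := by
    simp only [g, dotProduct, Matrix.mulVec, kvec, Pi.star_apply]
    fun_prop
  obtain ⟨a, ha⟩ := exists_unitVec hM
  obtain ⟨b, hb⟩ := exists_unitVec hN
  obtain ⟨p, hp, hmax⟩ :=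
    ((isCompact_setOf_unitVec M).prod (isCompact_setOf_unitVec N)).exists_isMaxOn
      ⟨(a, b), ha, hb⟩ hg.continuousOn
  rw [isMaxOn_iff] at hmax
  let f :=
    Complex.reLm ∘ₗ Matrix.traceLinearMap (Fin M × Fin N) ℝ ℂ ∘ₗ LinearMap.mulLeft ℝ A
  have hpure :
      IsGreatest (f '' {X | ∃ a b, unitVec a ∧ unitVec b ∧ X = prodState a b}) (g p) := by
    refine ⟨⟨prodState p.1 p.2, ⟨p.1, p.2, hp.1, hp.2, rfl⟩, ?_⟩, ?_⟩
    · simp [f, g, trace_mul_prodState]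
    · rintro _ ⟨_, ⟨a, b, ha, hb, rfl⟩, rfl⟩
      simpa [f, g, trace_mul_prodState] using hmax (a, b) (Set.mk_mem_prod ha hb)
  have hsep := hpure.image_convexHull (f.convexOn (convex_convexHull ℝ _))
  refine ⟨g p, ?_, ⟨p.1, p.2, hp.1, hp.2, rfl⟩, ?_⟩
  · convert hsep using 1
    ext r
    simp [SepSet, f, eq_comm]
  · rintro _ ⟨a, b, ha, hb, rfl⟩
    exact hmax (a, b) (Set.mk_mem_prod ha hb)

theorem max_over_separable_eq_max_over_product_vectors
    (M N : ℕ) (hM : 1 ≤ M) (hN : 1 ≤ N)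
    (A : Matrix (Fin M × Fin N) (Fin M × Fin N) ℂ) (hA : A.IsHermitian) :
    ∃ v : ℝ,
      IsGreatest {r : ℝ | ∃ σ ∈ SepSet M N, r = (Matrix.trace (A * σ)).re} v ∧
      IsGreatest {r : ℝ | ∃ a b, unitVec a ∧ unitVec b ∧
          r = ((star (kvec a b)) ⬝ᵥ A.mulVec (kvec a b)).re} v :=
  max_over_separable_eq_max_over_product_vectors_general M N hM hN A
end

section
/- Let M, N ≥ 1, set k = M²N², and let ρ be a density matrix on ℂ^M ⊗ ℂ^N. Let ε', δ' > 0. Suppose there exist p̃_i ≥ 0 with Σ_j p̃_j > 0 and nonzero vectors α̃_i ∈ ℂ^M, β̃_i ∈ ℂ^N (i = 1,…,k) such that (i) |1 − ‖α̃_i‖² · ‖β̃_i‖² · Σ_{j=1}^{k} p̃_j| < ε' for every i, and (ii) ‖ρ − σ̃‖₂ < δ', where σ̃ = Σ_i p̃_i (α̃_i α̃_iᴴ) ⊗ (β̃_i β̃_iᴴ). Then there exists a separable state σ̂ ∈ S_{M,N} with ‖ρ − σ̂‖₂ < δ' + ε'. -/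
/-!
Normalising the certificate vectors writes `σ̃ = ∑ wᵢ Pᵢ` with pure product states `Pᵢ` and
`wᵢ = p̃ᵢ ‖α̃ᵢ‖² ‖β̃ᵢ‖²`, so `σ̂ = σ̃ / ∑ wᵢ` is separable. As `‖Pᵢ‖₂ = 1`, we get
`‖σ̃ - σ̂‖₂ ≤ |∑ wᵢ - 1|`, and `∑ wᵢ - 1` is the `p̃`-weighted average of the quantities
`‖α̃ᵢ‖² ‖β̃ᵢ‖² ∑ p̃ⱼ - 1`, each of absolute value below `ε'`.
-/

open scoped Matrix Kronecker BigOperators ComplexOrder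

/-- The Frobenius (Hilbert–Schmidt) norm `√(tr(Xᴴ X))`. -/
noncomputable def frobNorm {n : Type*} [Fintype n] (X : Matrix n n ℂ) : ℝ :=
  Real.sqrt ((Matrix.trace (Xᴴ * X)).re)

open Complex

attribute [local instance] Matrix.frobeniusSeminormedAddCommGroup
  Matrix.frobeniusNormedAddCommGroup Matrix.frobeniusNormedSpace

section Frobenius

variable {m n : Type*} [Fintype m] [Fintype n]

lemma re_trace_conjTranspose_mul_self (X : Matrix m n ℂ) :
    (Xᴴ * X).trace.re = ∑ i, ∑ j, normSq (X i j) := by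
  simp only [Matrix.trace, Matrix.diag, Matrix.mul_apply, Matrix.conjTranspose_apply, re_sum,
    RCLike.star_def, mul_comm (starRingEnd ℂ _), mul_conj, ofReal_re]
  exact Finset.sum_comm

lemma frobNorm_eq_norm (X : Matrix n n ℂ) : frobNorm X = ‖X‖ := by
  simp only [frobNorm, re_trace_conjTranspose_mul_self, Matrix.frobenius_norm_def,
    Real.sqrt_eq_rpow, Real.rpow_two, Complex.sq_norm]

end Frobenius

section Vectors

variable {M N : ℕ}

def sqNorm (a : Fin M → ℂ) : ℝ := ∑ j, normSq (a j)

noncomputable def normalizeVec (a : Fin M → ℂ) : Fin M → ℂ :=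
  ((√(sqNorm a) : ℝ) : ℂ)⁻¹ • a

lemma sqNorm_pos {a : Fin M → ℂ} (ha : a ≠ 0) : 0 < sqNorm a := by
  obtain ⟨j, hj⟩ := Function.ne_iff.mp ha
  exact Finset.sum_pos' (fun j _ => normSq_nonneg _)
    ⟨j, Finset.mem_univ j, normSq_pos.mpr hj⟩

lemma sqNorm_smul (r : ℂ) (a : Fin M → ℂ) : sqNorm (r • a) = normSq r * sqNorm a := by
  simp only [sqNorm, Pi.smul_apply, smul_eq_mul, map_mul, Finset.mul_sum]

lemma sqNorm_normalizeVec {a : Fin M → ℂ} (ha : a ≠ 0) : sqNorm (normalizeVec a) = 1 := by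
  rw [normalizeVec, sqNorm_smul, map_inv₀, normSq_ofReal, Real.mul_self_sqrt (sqNorm_pos ha).le,
    inv_mul_cancel₀ (sqNorm_pos ha).ne']

lemma sqrt_sqNorm_smul_normalizeVec {a : Fin M → ℂ} (ha : a ≠ 0) :
    ((√(sqNorm a) : ℝ) : ℂ) • normalizeVec a = a := by
  have : ((√(sqNorm a) : ℝ) : ℂ) ≠ 0 := ofReal_ne_zero.mpr (Real.sqrt_pos.mpr (sqNorm_pos ha)).ne'
  rw [normalizeVec, smul_inv_smul₀ this]

lemma outer_smul (r : ℂ) (a : Fin M → ℂ) : outer (r • a) = (normSq r : ℂ) • outer a := by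
  ext j k
  simp only [outer, Matrix.vecMulVec_apply, Pi.smul_apply, smul_eq_mul, map_mul,
    Matrix.smul_apply, normSq_eq_conj_mul_self]
  ring

lemma prodState_smul (r s : ℂ) (a : Fin M → ℂ) (b : Fin N → ℂ) :
    prodState (r • a) (s • b) = (normSq r * normSq s) • prodState a b := by
  rw [prodState, outer_smul, outer_smul, Matrix.smul_kronecker, Matrix.kronecker_smul, smul_smul,
    prodState, ← ofReal_mul, ← Complex.coe_smul]

lemma prodState_eq_smul_prodState_normalizeVec {a : Fin M → ℂ} {b : Fin N → ℂ}
    (ha : a ≠ 0) (hb : b ≠ 0) :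
    prodState a b = (sqNorm a * sqNorm b) • prodState (normalizeVec a) (normalizeVec b) := by
  conv_lhs => rw [← sqrt_sqNorm_smul_normalizeVec ha, ← sqrt_sqNorm_smul_normalizeVec hb]
  rw [prodState_smul, normSq_ofReal, normSq_ofReal, Real.mul_self_sqrt (sqNorm_pos ha).le,
    Real.mul_self_sqrt (sqNorm_pos hb).le]

lemma norm_prodState (a : Fin M → ℂ) (b : Fin N → ℂ) :
    ‖prodState a b‖ = sqNorm a * sqNorm b := by
  have hsq : ∑ p, ∑ q, normSq (prodState a b p q) = (sqNorm a * sqNorm b) ^ 2 := by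
    simp only [prodState, outer, Matrix.kronecker_apply, Matrix.vecMulVec_apply, map_mul,
      normSq_conj, Fintype.sum_prod_type, sqNorm, ← Finset.sum_mul, ← Finset.mul_sum]
    ring
  have hnn : 0 ≤ sqNorm a * sqNorm b :=
    mul_nonneg (Finset.sum_nonneg fun _ _ => normSq_nonneg _)
      (Finset.sum_nonneg fun _ _ => normSq_nonneg _)
  rw [← frobNorm_eq_norm, frobNorm, re_trace_conjTranspose_mul_self, hsq, Real.sqrt_sq hnn]

lemma inv_smul_sum_mem_sepSet {ι : Type*} [Fintype ι] {w : ι → ℝ} (hw : ∀ i, 0 ≤ w i)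
    (hW : 0 < ∑ i, w i) {a : ι → Fin M → ℂ} {b : ι → Fin N → ℂ}
    (ha : ∀ i, unitVec (a i)) (hb : ∀ i, unitVec (b i)) :
    (∑ i, w i)⁻¹ • ∑ i, w i • prodState (a i) (b i) ∈ SepSet M N :=
  Finset.univ.centerMass_mem_convexHull (fun i _ => hw i) hW
    fun i _ => ⟨a i, b i, ha i, hb i, rfl⟩

end Vectors

lemma norm_sum_sub_inv_smul_sum_le {E ι : Type*} [SeminormedAddCommGroup E] [NormedSpace ℝ E]
    [Fintype ι] {w : ι → ℝ} (hw : ∀ i, 0 ≤ w i) (hW : 0 < ∑ i, w i) {x : ι → E}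
    (hx : ∀ i, ‖x i‖ ≤ 1) :
    ‖∑ i, w i • x i - (∑ i, w i)⁻¹ • ∑ i, w i • x i‖ ≤ |∑ i, w i - 1| := by
  set W := ∑ i, w i
  have hsum : ‖∑ i, w i • x i‖ ≤ W :=
    (norm_sum_le _ _).trans <| Finset.sum_le_sum fun i _ => by
      rw [norm_smul, Real.norm_of_nonneg (hw i)]
      exact mul_le_of_le_one_right (hw i) (hx i)
  calc ‖∑ i, w i • x i - W⁻¹ • ∑ i, w i • x i‖
      = |1 - W⁻¹| * ‖∑ i, w i • x i‖ := by
        rw [← Real.norm_eq_abs, ← norm_smul, sub_smul, one_smul]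
    _ ≤ |1 - W⁻¹| * W := by gcongr
    _ = |W - 1| := by
      rw [← abs_of_pos hW, ← abs_mul, abs_of_pos hW, sub_mul, inv_mul_cancel₀ hW.ne', one_mul]

lemma exists_pos_of_sum_pos {ι : Type*} [Fintype ι] {q : ι → ℝ} (h : 0 < ∑ i, q i) :
    ∃ i, 0 < q i := by
  obtain ⟨i, -, hi⟩ := Finset.exists_lt_of_sum_lt (s := Finset.univ) (f := 0) (g := q)
    (by simpa using h)
  exact ⟨i, hi⟩

lemma abs_sum_mul_sub_one_lt {ι : Type*} [Fintype ι] {q c : ι → ℝ} {ε : ℝ}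
    (hq : ∀ i, 0 ≤ q i) (hS : 0 < ∑ i, q i) (h : ∀ i, |1 - c i * ∑ j, q j| < ε) :
    |∑ i, q i * c i - 1| < ε := by
  obtain ⟨i₀, hi₀⟩ := exists_pos_of_sum_pos hS
  set S := ∑ i, q i
  have hexp : ∑ i, q i * (c i * S - 1) = (∑ i, q i * c i - 1) * S := by
    simp only [mul_sub, mul_one, Finset.sum_sub_distrib, ← mul_assoc, ← Finset.sum_mul]
    ring
  have key : |∑ i, q i * (c i * S - 1)| < ε * S :=
    calc |∑ i, q i * (c i * S - 1)| ≤ ∑ i, q i * |c i * S - 1| :=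
          (Finset.abs_sum_le_sum_abs _ _).trans_eq <| by simp only [abs_mul, abs_of_nonneg (hq _)]
      _ < ∑ i, q i * ε :=
          Finset.sum_lt_sum
            (fun i _ => by rw [abs_sub_comm]; exact mul_le_mul_of_nonneg_left (h i).le (hq i))
            ⟨i₀, Finset.mem_univ _, by rw [abs_sub_comm]; exact mul_lt_mul_of_pos_left (h i₀) hi₀⟩
      _ = ε * S := by rw [← Finset.sum_mul, mul_comm]
  rwa [hexp, abs_mul, abs_of_pos hS, mul_lt_mul_iff_of_pos_right hS] at key

theorem qsep_yes_certificate_correctness_general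
    (M N : ℕ)
    (ρ : Matrix (Fin M × Fin N) (Fin M × Fin N) ℂ)
    (ε' δ' : ℝ)
    (qt : Fin (M ^ 2 * N ^ 2) → ℝ) (hqt : ∀ i, 0 ≤ qt i) (hsum : 0 < ∑ j, qt j)
    (αt : Fin (M ^ 2 * N ^ 2) → Fin M → ℂ) (βt : Fin (M ^ 2 * N ^ 2) → Fin N → ℂ)
    (hαne : ∀ i, αt i ≠ 0) (hβne : ∀ i, βt i ≠ 0)
    (h1 : ∀ i, |1 - (∑ j, Complex.normSq (αt i j)) * (∑ l, Complex.normSq (βt i l))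
        * ∑ j, qt j| < ε')
    (h2 : frobNorm (ρ - ∑ i, qt i • prodState (αt i) (βt i)) < δ') :
    ∃ σ ∈ SepSet M N, frobNorm (ρ - σ) < δ' + ε' := by
  set c : Fin (M ^ 2 * N ^ 2) → ℝ := fun i => sqNorm (αt i) * sqNorm (βt i)
  have hc : ∀ i, 0 < c i := fun i => mul_pos (sqNorm_pos (hαne i)) (sqNorm_pos (hβne i))
  set w := fun i => qt i * c i
  have hw : ∀ i, 0 ≤ w i := fun i => mul_nonneg (hqt i) (hc i).le
  have hW : 0 < ∑ i, w i := by
    obtain ⟨i₀, hi₀⟩ := exists_pos_of_sum_pos hsum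
    exact Finset.sum_pos' (fun i _ => hw i) ⟨i₀, Finset.mem_univ _, mul_pos hi₀ (hc i₀)⟩
  have hσ : ∑ i, qt i • prodState (αt i) (βt i)
      = ∑ i, w i • prodState (normalizeVec (αt i)) (normalizeVec (βt i)) := by
    simp only [prodState_eq_smul_prodState_normalizeVec (hαne _) (hβne _), smul_smul, w, c]
  have hnorm : ∀ i, ‖prodState (normalizeVec (αt i)) (normalizeVec (βt i))‖ ≤ 1 := fun i => by
    rw [norm_prodState, sqNorm_normalizeVec (hαne i), sqNorm_normalizeVec (hβne i), one_mul]
  refine ⟨_, inv_smul_sum_mem_sepSet hw hW (fun i => sqNorm_normalizeVec (hαne i))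
    (fun i => sqNorm_normalizeVec (hβne i)), ?_⟩
  rw [frobNorm_eq_norm, hσ] at h2
  rw [frobNorm_eq_norm]
  calc _ ≤ _ := norm_sub_le_norm_sub_add_norm_sub _ _ _
    _ < δ' + ε' := add_lt_add_of_lt_of_le h2 <|
      (norm_sum_sub_inv_smul_sum_le hw hW hnorm).trans (abs_sum_mul_sub_one_lt hqt hsum h1).le

theorem qsep_yes_certificate_correctness
    (M N : ℕ) (hM : 1 ≤ M) (hN : 1 ≤ N)
    (ρ : Matrix (Fin M × Fin N) (Fin M × Fin N) ℂ)
    (hρ : ρ.PosSemidef ∧ ρ.trace = 1)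
    (ε' δ' : ℝ) (hε : 0 < ε') (hδ : 0 < δ')
    (qt : Fin (M ^ 2 * N ^ 2) → ℝ) (hqt : ∀ i, 0 ≤ qt i) (hsum : 0 < ∑ j, qt j)
    (αt : Fin (M ^ 2 * N ^ 2) → Fin M → ℂ) (βt : Fin (M ^ 2 * N ^ 2) → Fin N → ℂ)
    (hαne : ∀ i, αt i ≠ 0) (hβne : ∀ i, βt i ≠ 0)
    (h1 : ∀ i, |1 - (∑ j, Complex.normSq (αt i j)) * (∑ l, Complex.normSq (βt i l))
        * ∑ j, qt j| < ε')
    (h2 : frobNorm (ρ - ∑ i, qt i • prodState (αt i) (βt i)) < δ') :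
    ∃ σ ∈ SepSet M N, frobNorm (ρ - σ) < δ' + ε' :=
  qsep_yes_certificate_correctness_general M N ρ ε' δ' qt hqt hsum αt βt hαne hβne h1 h2
end
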